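/- Let G be a misère Partizan Kayles position, let x be the number of strips of G whose length is congruent to 1 modulo 3, and y the number of strips whose length is congruent to 2 modulo 3. Then o⁻(G) = N if x = y or (x < y and x + 2y ≡ 0 mod 3); o⁻(G) = R if x > y or (x < y and x + 2y ≡ 1 mod 3); and o⁻(G) = P if x < y and x + 2y ≡ 2 mod 3. -/

import Mathlib

/-- Add a strip of length `k` to a position (strips of length 0 are discarded). -/
def addStrip (m : Multiset ℕ) (k : ℕ) : Multiset ℕ := if k = 0 then m else k ::ₘ m

/-- Left removes one square from a strip of length `n ≥ 1`, leaving strips `i` and `n-1-i`. -/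
def LeftMove (G G' : Multiset ℕ) : Prop :=
  ∃ n ∈ G, ∃ i, i + 1 ≤ n ∧ G' = addStrip (addStrip (G.erase n) i) (n - 1 - i)

/-- Right removes two adjacent squares from a strip of length `n ≥ 2`, leaving `i` and `n-2-i`. -/
def RightMove (G G' : Multiset ℕ) : Prop :=
  ∃ n ∈ G, ∃ i, i + 2 ≤ n ∧ G' = addStrip (addStrip (G.erase n) i) (n - 2 - i)

mutual
  /-- Misère play: Left, to move, wins (a player unable to move wins). -/
  inductive LeftWinsMover : Multiset ℕ → Prop
    | cannot (G : Multiset ℕ) : (¬ ∃ G', LeftMove G G') → LeftWinsMover G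
    | move (G G' : Multiset ℕ) : LeftMove G G' → LeftWinsWaiter G' → LeftWinsMover G
  /-- Misère play: Left wins with Right to move. -/
  inductive LeftWinsWaiter : Multiset ℕ → Prop
    | intro (G : Multiset ℕ) : (∃ G', RightMove G G') →
        (∀ G', RightMove G G' → LeftWinsMover G') → LeftWinsWaiter G
end

inductive Outcome | L | N | P | R
  deriving DecidableEq

open Classical in
/-- The misère outcome `o⁻(G)`. -/
noncomputable def outcome (G : Multiset ℕ) : Outcome :=
  if LeftWinsMover G then (if LeftWinsWaiter G then Outcome.L else Outcome.N)
  else (if LeftWinsWaiter G then Outcome.P else Outcome.R)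

/-- The partial order on outcomes: `L` greatest, `R` least, `N` and `P` incomparable. -/
def Outcome.le (a b : Outcome) : Prop := a = b ∨ a = Outcome.R ∨ b = Outcome.L

/-- `pos k j` is the position `kS₁ + jS₂`. -/
def pos (k j : ℕ) : Multiset ℕ := Multiset.replicate k 1 + Multiset.replicate j 2

/-!
Give a strip weight `+1` if its length is `2 mod 3`, `-1` if it is `1 mod 3` and `0` otherwise,
and let `d = y - x` be the total weight of the position. Cutting a strip of length `n` into
`i` and `j` with `i + j + 1 = n` changes `d` by `+1` or `-2`, and with `i + j + 2 = n` by `-1`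
or `+2`; so every Left move adds `1` to `d` modulo 3 and every Right move subtracts `1`.
By induction on the total length, Left to move wins iff `d ≥ 0` and `d ≡ 0 mod 3`, and Left
wins with Right to move iff `d ≥ 1` and `d ≡ 1 mod 3`. Left keeps this invariant by a move
adding `1` to `d` (from a strip of length `1 mod 3` or a nonzero multiple of 3), or, if every
strip has length `2 mod 3`, by any move at all, since then `d ≥ 3`; Right breaks it by a move
subtracting `1`, which exists from every strip of length at least 2.
-/

def stripWeight (n : ℕ) : ℤ := if n % 3 = 1 then -1 else if n % 3 = 2 then 1 else 0

-- A closed form that `omega` can reason with directly.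
lemma stripWeight_eq (n : ℕ) : stripWeight n = ((2 * n + 1) % 3 : ℕ) - 1 := by
  unfold stripWeight
  split_ifs <;> omega

def excess (G : Multiset ℕ) : ℤ := (G.map stripWeight).sum

lemma excess_cons (n : ℕ) (G : Multiset ℕ) : excess (n ::ₘ G) = stripWeight n + excess G := by
  simp [excess]

lemma excess_erase {G : Multiset ℕ} {n : ℕ} (hn : n ∈ G) :
    excess (G.erase n) = excess G - stripWeight n := by
  have := excess_cons n (G.erase n)
  rw [Multiset.cons_erase hn] at this
  linarith

lemma excess_addStrip (G : Multiset ℕ) (k : ℕ) :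
    excess (addStrip G k) = excess G + stripWeight k := by
  unfold addStrip
  split_ifs with hk
  · simp [hk, stripWeight]
  · rw [excess_cons, add_comm]

lemma sum_addStrip (G : Multiset ℕ) (k : ℕ) : (addStrip G k).sum = G.sum + k := by
  unfold addStrip
  split_ifs with hk <;> simp [hk, add_comm]

lemma excess_split {G : Multiset ℕ} {n : ℕ} (hn : n ∈ G) (i j : ℕ) :
    excess (addStrip (addStrip (G.erase n) i) j) =
      excess G + (stripWeight i + stripWeight j - stripWeight n) := by
  rw [excess_addStrip, excess_addStrip, excess_erase hn]
  ring

lemma sum_split {G : Multiset ℕ} {n : ℕ} (hn : n ∈ G) (i j : ℕ) :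
    (addStrip (addStrip (G.erase n) i) j).sum + n = G.sum + i + j := by
  rw [sum_addStrip, sum_addStrip, ← Multiset.sum_erase hn]
  ring

lemma stripWeight_split_of_add_one {i j n : ℕ} (h : i + j + 1 = n) :
    stripWeight i + stripWeight j - stripWeight n = 1 ∨
      stripWeight i + stripWeight j - stripWeight n = -2 := by
  simp only [stripWeight_eq]
  omega

lemma stripWeight_split_of_add_two {i j n : ℕ} (h : i + j + 2 = n) :
    stripWeight i + stripWeight j - stripWeight n = -1 ∨
      stripWeight i + stripWeight j - stripWeight n = 2 := by
  simp only [stripWeight_eq]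
  omega

lemma LeftMove.excess_eq {G G' : Multiset ℕ} (h : LeftMove G G') :
    excess G' = excess G + 1 ∨ excess G' = excess G - 2 := by
  obtain ⟨n, hn, i, hi, rfl⟩ := h
  rw [excess_split hn]
  have := stripWeight_split_of_add_one (i := i) (j := n - 1 - i) (n := n) (by omega)
  omega

lemma RightMove.excess_eq {G G' : Multiset ℕ} (h : RightMove G G') :
    excess G' = excess G - 1 ∨ excess G' = excess G + 2 := by
  obtain ⟨n, hn, i, hi, rfl⟩ := h
  rw [excess_split hn]
  have := stripWeight_split_of_add_two (i := i) (j := n - 2 - i) (n := n) (by omega)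
  omega

lemma LeftMove.sum_lt {G G' : Multiset ℕ} (h : LeftMove G G') : G'.sum < G.sum := by
  obtain ⟨n, hn, i, hi, rfl⟩ := h
  have := sum_split hn i (n - 1 - i)
  omega

lemma RightMove.sum_lt {G G' : Multiset ℕ} (h : RightMove G G') : G'.sum < G.sum := by
  obtain ⟨n, hn, i, hi, rfl⟩ := h
  have := sum_split hn i (n - 2 - i)
  omega

lemma exists_leftMove_excess_eq_add_one {G : Multiset ℕ} {n : ℕ} (hn : n ∈ G)
    (h : n % 3 = 1 ∨ (n % 3 = 0 ∧ n ≠ 0)) :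
    ∃ G', LeftMove G G' ∧ excess G' = excess G + 1 := by
  refine ⟨_, ⟨n, hn, 0, by omega, rfl⟩, ?_⟩
  rw [excess_split hn]
  simp only [stripWeight_eq]
  omega

lemma exists_rightMove_excess_eq_sub_one {G : Multiset ℕ} {n : ℕ} (hn : n ∈ G) (h : 2 ≤ n) :
    ∃ G', RightMove G G' ∧ excess G' = excess G - 1 := by
  obtain ⟨i, hi, hw⟩ : ∃ i, i + 2 ≤ n ∧
      stripWeight i + stripWeight (n - 2 - i) - stripWeight n = -1 := by
    by_cases h1 : n % 3 = 1
    · refine ⟨1, by omega, ?_⟩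
      simp only [stripWeight_eq]
      omega
    · refine ⟨0, by omega, ?_⟩
      simp only [stripWeight_eq]
      omega
  exact ⟨_, ⟨n, hn, i, hi, rfl⟩, by rw [excess_split hn, hw]; ring⟩

lemma excess_eq_zero_of_forall_eq_zero {G : Multiset ℕ} (h : ∀ n ∈ G, n = 0) : excess G = 0 :=
  Multiset.sum_eq_zero fun w hw => by
    obtain ⟨n, hn, rfl⟩ := Multiset.mem_map.1 hw
    simp [h n hn, stripWeight]

lemma excess_pos_of_forall_eq_zero_or_mod_three_eq_two {G : Multiset ℕ}
    (h : ∀ m ∈ G, m = 0 ∨ m % 3 = 2) {n : ℕ} (hn : n ∈ G) (hn0 : n ≠ 0) : 0 < excess G := by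
  have hrest : 0 ≤ excess (G.erase n) := Multiset.sum_nonneg fun w hw => by
    obtain ⟨m, hm, rfl⟩ := Multiset.mem_map.1 hw
    rcases h m (Multiset.mem_of_mem_erase hm) with hm0 | hm2 <;> simp [stripWeight, *]
  have hwn : stripWeight n = 1 := by
    have := h n hn
    simp only [stripWeight_eq]
    omega
  rw [excess_erase hn, hwn] at hrest
  omega

lemma exists_mem_mod_three_eq_two {G : Multiset ℕ} (h : 0 < excess G) :
    ∃ n ∈ G, n % 3 = 2 := by
  by_contra! hG
  have : excess G ≤ 0 := by
    simpa [excess] using Multiset.sum_map_le_sum_map stripWeight 0 fun n hn => by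
      have := hG n hn
      simp only [stripWeight_eq, Pi.zero_apply]
      omega
  omega

lemma leftWinsMover_of_excess {G : Multiset ℕ}
    (ih : ∀ G', LeftMove G G' → 1 ≤ excess G' ∧ excess G' % 3 = 1 → LeftWinsWaiter G')
    (h0 : 0 ≤ excess G) (h3 : excess G % 3 = 0) : LeftWinsMover G := by
  by_cases hup : ∃ n ∈ G, n % 3 = 1 ∨ (n % 3 = 0 ∧ n ≠ 0)
  · obtain ⟨n, hn, hn'⟩ := hup
    obtain ⟨G', hm, he⟩ := exists_leftMove_excess_eq_add_one hn hn'
    exact .move G G' hm (ih G' hm (by omega))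
  by_cases hnz : ∃ n ∈ G, n ≠ 0
  · obtain ⟨n, hn, hn0⟩ := hnz
    have hall : ∀ m ∈ G, m = 0 ∨ m % 3 = 2 := fun m hm => by
      by_contra hm'
      exact hup ⟨m, hm, by omega⟩
    have hpos := excess_pos_of_forall_eq_zero_or_mod_three_eq_two hall hn hn0
    have hm : LeftMove G _ := ⟨n, hn, 0, by omega, rfl⟩
    exact .move G _ hm (ih _ hm (by rcases hm.excess_eq with he | he <;> omega))
  · exact .cannot G fun ⟨_, n, hn, _, hi, _⟩ => hnz ⟨n, hn, by omega⟩

lemma excess_of_leftWinsMover {G : Multiset ℕ}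
    (ih : ∀ G', LeftMove G G' → LeftWinsWaiter G' → 1 ≤ excess G' ∧ excess G' % 3 = 1)
    (h : LeftWinsMover G) : 0 ≤ excess G ∧ excess G % 3 = 0 := by
  cases h with
  | cannot _ hno =>
    have : ∀ n ∈ G, n = 0 := fun n hn => by
      by_contra hn0
      exact hno ⟨_, n, hn, 0, by omega, rfl⟩
    simp [excess_eq_zero_of_forall_eq_zero this]
  | move _ G' hm hw =>
    have := ih G' hm hw
    rcases hm.excess_eq with he | he <;> omega

lemma leftWinsWaiter_of_excess {G : Multiset ℕ}
    (ih : ∀ G', RightMove G G' → 0 ≤ excess G' ∧ excess G' % 3 = 0 → LeftWinsMover G')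
    (h1 : 1 ≤ excess G) (h3 : excess G % 3 = 1) : LeftWinsWaiter G := by
  obtain ⟨n, hn, hn2⟩ := exists_mem_mod_three_eq_two (by omega : 0 < excess G)
  refine .intro G ⟨_, n, hn, 0, by omega, rfl⟩ fun G' hm => ih G' hm ?_
  rcases hm.excess_eq with he | he <;> omega

lemma excess_of_leftWinsWaiter {G : Multiset ℕ}
    (ih : ∀ G', RightMove G G' → LeftWinsMover G' → 0 ≤ excess G' ∧ excess G' % 3 = 0)
    (h : LeftWinsWaiter G) : 1 ≤ excess G ∧ excess G % 3 = 1 := by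
  obtain ⟨_, ⟨_, n, hn, i, hi, _⟩, hall⟩ := h
  obtain ⟨G', hm, he⟩ := exists_rightMove_excess_eq_sub_one hn (by omega)
  have := ih G' hm (hall G' hm)
  omega

theorem leftWins_iff (G : Multiset ℕ) :
    (LeftWinsMover G ↔ 0 ≤ excess G ∧ excess G % 3 = 0) ∧
      (LeftWinsWaiter G ↔ 1 ≤ excess G ∧ excess G % 3 = 1) := by
  induction hs : G.sum using Nat.strong_induction_on generalizing G with
  | _ s ih =>
  have ihL (G') (hm : LeftMove G G') := (ih _ (hs ▸ hm.sum_lt) G' rfl).2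
  have ihR (G') (hm : RightMove G G') := (ih _ (hs ▸ hm.sum_lt) G' rfl).1
  exact ⟨⟨excess_of_leftWinsMover fun G' hm => (ihL G' hm).1,
      fun h => leftWinsMover_of_excess (fun G' hm => (ihL G' hm).2) h.1 h.2⟩,
    ⟨excess_of_leftWinsWaiter fun G' hm => (ihR G' hm).1,
      fun h => leftWinsWaiter_of_excess (fun G' hm => (ihR G' hm).2) h.1 h.2⟩⟩

lemma excess_eq_card_sub_card (G : Multiset ℕ) :
    excess G = (G.filter (fun m => m % 3 = 2)).card - (G.filter (fun m => m % 3 = 1)).card := by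
  induction G using Multiset.induction_on with
  | empty => simp [excess]
  | cons n G ih =>
    rw [excess_cons, ih, Multiset.filter_cons, Multiset.filter_cons, stripWeight_eq]
    split_ifs <;> simp only [Multiset.singleton_add, Multiset.zero_add, Multiset.card_cons] <;>
      push_cast <;> omega

theorem kayles_general_outcome (G : Multiset ℕ) (hG : 0 ∉ G)
    (x y : ℕ) (hx : x = (G.filter (fun m => m % 3 = 1)).card)
    (hy : y = (G.filter (fun m => m % 3 = 2)).card) :
    ((x = y ∨ (x < y ∧ (x + 2 * y) % 3 = 0)) → outcome G = Outcome.N) ∧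
    ((x > y ∨ (x < y ∧ (x + 2 * y) % 3 = 1)) → outcome G = Outcome.R) ∧
    ((x < y ∧ (x + 2 * y) % 3 = 2) → outcome G = Outcome.P) := by
  have hd : excess G = y - x := by rw [excess_eq_card_sub_card, hx, hy]
  obtain ⟨hM, hW⟩ := leftWins_iff G
  simp only [outcome, hM, hW, hd]
  refine ⟨fun h => ?_, fun h => ?_, fun h => ?_⟩ <;> split_ifs <;> first | rfl | omega
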